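/- arXiv:2404.13585 — 3 statements merged into one kernel-verified Lean document; each statement's English description precedes it below -/
import Mathlib

section
/- Let $H_1, H_2$ be $n\times n$ complex Hermitian matrices. Suppose $v:\mathbb{R}\times\mathbb{R}\to\mathbb{C}^n$ is continuously differentiable, satisfies the warped phase system $\partial_t v(t,p) = -H_1\,\partial_p v(t,p) + i H_2\, v(t,p)$ pointwise, and for every compact time interval $I$ there is a compact set $K\subset\mathbb{R}$ such that $v(t,p)=0$ whenever $t\in I$ and $p\notin K$. Then the $L^2$ norm in $p$ is conserved: $\int_{\mathbb{R}} \|v(t,p)\|^2\,dp = \int_{\mathbb{R}} \|v(0,p)\|^2\,dp$ for all $t\in\mathbb{R}$, where $\|\cdot\|$ is the Euclidean norm on $\mathbb{C}^n$. -/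
/-! The density `ρ = ‖v‖²` and the flux `J = Re ⟪v, H₁ v⟫` satisfy the continuity equation
`∂ₜ ρ + ∂ₚ J = 0`: since `H₁` is Hermitian, `∂ₚ J = 2 Re ⟪v, H₁ ∂ₚ v⟫`, and the `H₂`-term of
`∂ₜ ρ = 2 Re ⟪v, ∂ₜ v⟫` is `2 Re (i ⟪v, H₂ v⟫) = 0`. Differentiating under the integral, which the
locally uniform compact support allows, `d/dt ∫ ρ = -∫ ∂ₚ J = 0`. -/

open Matrix MeasureTheory Metric Set Filter Topology

section PartialDerivatives

variable {F : Type*} [NormedAddCommGroup F] [NormedSpace ℝ F] {f : ℝ → ℝ → F}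

theorem hasDerivAt_fderiv_fst (hf : Differentiable ℝ (fun q : ℝ × ℝ => f q.1 q.2)) (t p : ℝ) :
    HasDerivAt (fun τ => f τ p) (fderiv ℝ (fun q : ℝ × ℝ => f q.1 q.2) (t, p) (1, 0)) t :=
  (hf (t, p)).hasFDerivAt.comp_hasDerivAt (f := fun τ => (τ, p)) t
    ((hasDerivAt_id' t).prodMk (hasDerivAt_const t p))

theorem hasDerivAt_fderiv_snd (hf : Differentiable ℝ (fun q : ℝ × ℝ => f q.1 q.2)) (t p : ℝ) :
    HasDerivAt (fun q => f t q) (fderiv ℝ (fun q : ℝ × ℝ => f q.1 q.2) (t, p) (0, 1)) p :=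
  (hf (t, p)).hasFDerivAt.comp_hasDerivAt (f := fun q => (t, q)) p
    ((hasDerivAt_const p t).prodMk (hasDerivAt_id' p))

theorem continuous_deriv_fst (hf : ContDiff ℝ 1 (fun q : ℝ × ℝ => f q.1 q.2)) :
    Continuous fun q : ℝ × ℝ => deriv (fun τ => f τ q.2) q.1 := by
  simp_rw [(hasDerivAt_fderiv_fst (hf.differentiable one_ne_zero) _ _).deriv]
  exact (hf.continuous_fderiv one_ne_zero).clm_apply continuous_const

theorem continuous_deriv_snd (hf : ContDiff ℝ 1 (fun q : ℝ × ℝ => f q.1 q.2)) :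
    Continuous fun q : ℝ × ℝ => deriv (fun p => f q.1 p) q.2 := by
  simp_rw [(hasDerivAt_fderiv_snd (hf.differentiable one_ne_zero) _ _).deriv]
  exact (hf.continuous_fderiv one_ne_zero).clm_apply continuous_const

end PartialDerivatives

theorem Matrix.IsHermitian.star_star_dotProduct_mulVec {ι α : Type*} [Fintype ι] [CommSemiring α]
    [StarRing α] {H : Matrix ι ι α} (hH : H.IsHermitian) (x y : ι → α) :
    star (star x ⬝ᵥ H *ᵥ y) = star y ⬝ᵥ H *ᵥ x := by
  rw [← star_dotProduct, star_mulVec, hH.eq, dotProduct_mulVec]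

section QuadraticForm

variable {ι : Type*} [Fintype ι] {u : ℝ → ι → ℂ} {u' : ι → ℂ} {t : ℝ}

theorem HasDerivAt.mulVec (H : Matrix ι ι ℂ) (hu : HasDerivAt u u' t) :
    HasDerivAt (fun s => H *ᵥ u s) (H *ᵥ u') t :=
  ((mulVecLin H).restrictScalars ℝ).toContinuousLinearMap.hasFDerivAt.comp_hasDerivAt t hu

theorem HasDerivAt.star_dotProduct {w : ℝ → ι → ℂ} {w' : ι → ℂ}
    (hu : HasDerivAt u u' t) (hw : HasDerivAt w w' t) :
    HasDerivAt (fun s => star (u s) ⬝ᵥ w s) (star u' ⬝ᵥ w t + star (u t) ⬝ᵥ w') t := by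
  simp only [dotProduct, Pi.star_apply, ← Finset.sum_add_distrib]
  exact HasDerivAt.fun_sum fun i _ =>
    (((hasDerivAt_pi.mp hu) i).star.mul ((hasDerivAt_pi.mp hw) i)).congr_deriv (by ring)

theorem Matrix.IsHermitian.hasDerivAt_re_star_dotProduct_mulVec {H : Matrix ι ι ℂ}
    (hH : H.IsHermitian) (hu : HasDerivAt u u' t) :
    HasDerivAt (fun s => (star (u s) ⬝ᵥ H *ᵥ u s).re) (2 * (star (u t) ⬝ᵥ H *ᵥ u').re) t := by
  have h := Complex.reCLM.hasFDerivAt.comp_hasDerivAt t (hu.star_dotProduct (hu.mulVec H))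
  refine h.congr_deriv ?_
  rw [Complex.reCLM_apply, Complex.add_re, ← hH.star_star_dotProduct_mulVec, Complex.star_def,
    Complex.conj_re, two_mul]

theorem Matrix.IsHermitian.re_star_dotProduct_I_smul_mulVec_self {H : Matrix ι ι ℂ}
    (hH : H.IsHermitian) (x : ι → ℂ) :
    (star x ⬝ᵥ Complex.I • H *ᵥ x).re = 0 := by
  simpa [dotProduct_smul] using hH.im_star_dotProduct_mulVec_self x

end QuadraticForm

section ContinuityEquation

variable {E : Type*} [NormedAddCommGroup E] [NormedSpace ℝ E]

theorem hasDerivAt_integral_of_eq_zero_outside {F F' : ℝ → ℝ → E} {I K : Set ℝ} {t₀ : ℝ}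
    (hI : IsCompact I) (hIt₀ : I ∈ 𝓝 t₀) (hK : IsCompact K)
    (hF : ∀ t p, HasDerivAt (F · p) (F' t p) t)
    (hF_cont : Continuous fun q : ℝ × ℝ => F q.1 q.2)
    (hF'_cont : Continuous fun q : ℝ × ℝ => F' q.1 q.2)
    (hF_zero : ∀ t ∈ I, ∀ p ∉ K, F t p = 0) (hF'_zero : ∀ t ∈ I, ∀ p ∉ K, F' t p = 0) :
    HasDerivAt (fun t => ∫ p, F t p) (∫ p, F' t₀ p) t₀ := by
  obtain ⟨C, hC⟩ := (hI.prod hK).exists_bound_of_continuousOn hF'_cont.continuousOn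
  refine (hasDerivAt_integral_of_dominated_loc_of_deriv_le hIt₀ (bound := K.indicator fun _ => C)
    (Eventually.of_forall fun t => (hF_cont.comp (Continuous.prodMk_right t)).aestronglyMeasurable)
    ((hF_cont.comp (Continuous.prodMk_right t₀)).integrable_of_hasCompactSupport
      (HasCompactSupport.intro hK (hF_zero t₀ (mem_of_mem_nhds hIt₀))))
    (hF'_cont.comp (Continuous.prodMk_right t₀)).aestronglyMeasurable
    (Eventually.of_forall fun p t ht => ?_)
    ((integrable_indicator_iff hK.measurableSet).2 (integrableOn_const hK.measure_lt_top.ne))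
    (Eventually.of_forall fun p t _ => hF t p)).2
  by_cases hp : p ∈ K
  · simpa [indicator_of_mem hp] using hC (t, p) ⟨ht, hp⟩
  · simp [indicator_of_notMem hp, hF'_zero t ht p hp]

theorem integral_eq_of_continuity_equation [CompleteSpace E] {ρ ρ' J J' : ℝ → ℝ → E}
    (hρ : ∀ t p, HasDerivAt (ρ · p) (ρ' t p) t) (hJ : ∀ t p, HasDerivAt (J t ·) (J' t p) p)
    (hρ_cont : Continuous fun q : ℝ × ℝ => ρ q.1 q.2)
    (hρ'_cont : Continuous fun q : ℝ × ℝ => ρ' q.1 q.2)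
    (hJ_cont : Continuous fun q : ℝ × ℝ => J q.1 q.2)
    (hJ'_cont : Continuous fun q : ℝ × ℝ => J' q.1 q.2)
    (hbalance : ∀ t p, ρ' t p = -J' t p)
    (hsupp : ∀ I, IsCompact I → ∃ K, IsCompact K ∧ ∀ t ∈ I, ∀ p ∉ K, ρ t p = 0 ∧ J t p = 0)
    (t s : ℝ) : ∫ p, ρ t p = ∫ p, ρ s p := by
  have hderiv : ∀ t₀, HasDerivAt (fun t => ∫ p, ρ t p) 0 t₀ := by
    intro t₀
    obtain ⟨K, hK, hzero⟩ := hsupp (closedBall t₀ 1) (isCompact_closedBall t₀ 1)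
    have hJ'_zero : ∀ t ∈ closedBall t₀ 1, ∀ p ∉ K, J' t p = 0 := fun t ht p hp =>
      (hJ t p).unique <| (hasDerivAt_const p 0).congr_of_eventuallyEq <|
        (hK.isClosed.isOpen_compl.eventually_mem hp).mono fun q hq => (hzero t ht q hq).2
    have ht₀ : t₀ ∈ closedBall t₀ 1 := mem_closedBall_self zero_le_one
    have hflux : ∫ p, J' t₀ p = 0 := integral_eq_zero_of_hasDerivAt_of_integrable (hJ t₀)
      ((hJ'_cont.comp (Continuous.prodMk_right t₀)).integrable_of_hasCompactSupport
        (HasCompactSupport.intro hK (hJ'_zero t₀ ht₀)))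
      ((hJ_cont.comp (Continuous.prodMk_right t₀)).integrable_of_hasCompactSupport
        (HasCompactSupport.intro hK fun p hp => (hzero t₀ ht₀ p hp).2))
    simpa [hbalance, integral_neg, hflux] using
      hasDerivAt_integral_of_eq_zero_outside (isCompact_closedBall t₀ 1)
        (closedBall_mem_nhds t₀ one_pos) hK hρ hρ_cont hρ'_cont
        (fun t ht p hp => (hzero t ht p hp).1)
        (fun t ht p hp => by rw [hbalance, hJ'_zero t ht p hp, neg_zero])
  exact is_const_of_deriv_eq_zero (fun t => (hderiv t).differentiableAt)
    (fun t => (hderiv t).deriv) t s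

end ContinuityEquation

noncomputable def euclNorm {n : ℕ} (x : Fin n → ℂ) : ℝ :=
  Real.sqrt (∑ i, ‖x i‖ ^ 2)

theorem euclNorm_sq {n : ℕ} (x : Fin n → ℂ) : euclNorm x ^ 2 = (star x ⬝ᵥ x).re := by
  rw [euclNorm, Real.sq_sqrt (by positivity)]
  simp [dotProduct, Complex.re_sum, ← Complex.normSq_eq_norm_sq, Complex.normSq_apply]

/-- a `C¹` solution of the warped phase system
`∂ₜ v = -H₁ ∂ₚ v + i H₂ v` (with `H₁, H₂` Hermitian) that is compactly supported
in `p`, locally uniformly in `t`, conserves the `L²` norm in `p`. -/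
theorem stmt1 {n : ℕ} (H1 H2 : Matrix (Fin n) (Fin n) ℂ)
    (hH1 : H1.IsHermitian) (hH2 : H2.IsHermitian)
    (v : ℝ → ℝ → Fin n → ℂ)
    (hreg : ContDiff ℝ 1 (fun q : ℝ × ℝ => v q.1 q.2))
    (hpde : ∀ t p : ℝ, deriv (fun τ => v τ p) t
        = - H1.mulVec (deriv (fun q => v t q) p) + Complex.I • H2.mulVec (v t p))
    (hsupp : ∀ I : Set ℝ, IsCompact I → ∃ K : Set ℝ, IsCompact K ∧
        ∀ t ∈ I, ∀ p ∉ K, v t p = 0) :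
    ∀ t : ℝ, ∫ p : ℝ, (euclNorm (v t p)) ^ 2 = ∫ p : ℝ, (euclNorm (v 0 p)) ^ 2 := by
  intro t
  have hdiff := hreg.differentiable one_ne_zero
  have hv_t (t p : ℝ) : HasDerivAt (fun τ => v τ p) (deriv (fun τ => v τ p) t) t :=
    (hasDerivAt_fderiv_fst hdiff t p).differentiableAt.hasDerivAt
  have hv_p (t p : ℝ) : HasDerivAt (fun q => v t q) (deriv (fun q => v t q) p) p :=
    (hasDerivAt_fderiv_snd hdiff t p).differentiableAt.hasDerivAt
  have hv_cont := hreg.continuous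
  have hvt_cont := continuous_deriv_fst hreg
  have hvp_cont := continuous_deriv_snd hreg
  simp only [euclNorm_sq]
  refine integral_eq_of_continuity_equation
    (fun t p => by simpa using isHermitian_one.hasDerivAt_re_star_dotProduct_mulVec (hv_t t p))
    (fun t p => hH1.hasDerivAt_re_star_dotProduct_mulVec (hv_p t p))
    (by fun_prop) (by fun_prop) (by fun_prop) (by fun_prop) (fun t p => ?_) (fun I hI => ?_) t 0
  · rw [hpde, dotProduct_add, Complex.add_re, hH2.re_star_dotProduct_I_smul_mulVec_self]
    simp
  · obtain ⟨K, hK, hzero⟩ := hsupp I hI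
    exact ⟨K, hK, fun t ht p hp => by simp [hzero t ht p hp]⟩
end

section
/- Let $H_1$ be an $n\times n$ complex Hermitian matrix with spectral decomposition $H_1 = Q\Lambda Q^\dagger$, $Q$ unitary, $\Lambda = \mathrm{diag}(\lambda_1,\dots,\lambda_n)$ real, and set $\lambda_+ := \max\{0,\lambda_1,\dots,\lambda_n\}$. For $u_0\in\mathbb{C}^n$ define the explicit warped solution $v(t,p) := Q\,\mathrm{diag}\big(e^{-|p-\lambda_1 t|},\dots,e^{-|p-\lambda_n t|}\big)\,Q^\dagger u_0$. Then for every $t\ge 0$ and every $p \ge \max\{\lambda_+ t, 0\}$, the solution of $u' = H_1 u$, $u(0)=u_0$, is restored by $\exp(tH_1)u_0 = e^{p}\,v(t,p)$. -/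
open Matrix

/-!
Conjugating by the unitary `Q` diagonalises the flow: `exp(t H₁) = Q diag(e^{λᵢ t}) Q†`.
For `p ≥ λ₊ t` every `p - λᵢ t` is nonnegative, so the absolute values in the warped
solution drop out and `eᵖ e^{-(p - λᵢ t)} = e^{λᵢ t}` entrywise.
-/

theorem Real.exp_mul_exp_neg_abs_sub_of_le {a p : ℝ} (h : a ≤ p) :
    Real.exp p * Real.exp (-|p - a|) = Real.exp a := by
  rw [abs_of_nonneg (sub_nonneg.mpr h), ← Real.exp_add]
  ring_nf

namespace Matrix

variable {m 𝔸 : Type*} [Fintype m] [DecidableEq m]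

theorem exp_unitary_conj [NormedCommRing 𝔸] [NormedAlgebra ℚ 𝔸] [CompleteSpace 𝔸] [StarRing 𝔸]
    (U : Matrix m m 𝔸) (hU : U ∈ unitaryGroup m 𝔸) (A : Matrix m m 𝔸) :
    NormedSpace.exp (U * A * star U) = U * NormedSpace.exp A * star U :=
  exp_units_conj (Unitary.toUnits ⟨U, hU⟩) A

theorem smul_conj_diagonal {R S : Type*} [Semiring S] [Monoid R] [DistribMulAction R S]
    [IsScalarTower R S S] [SMulCommClass R S S] (c : R) (Q P : Matrix m m S) (d : m → S) :
    c • (Q * diagonal d * P) = Q * diagonal (c • d) * P := by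
  rw [← smul_mul, ← Matrix.mul_smul, diagonal_smul]

theorem exp_smul_unitary_conj_diagonal_ofReal (Q : Matrix m m ℂ) (hQ : Q ∈ unitaryGroup m ℂ)
    (l : m → ℝ) (t : ℝ) :
    NormedSpace.exp (t • (Q * diagonal (fun i => (l i : ℂ)) * Qᴴ)) =
      Q * diagonal (fun i => (Real.exp (l i * t) : ℂ)) * Qᴴ := by
  have hdiag : (t • fun i => (l i : ℂ)) = fun i => ((l i * t : ℝ) : ℂ) := by
    funext i
    simp [mul_comm]
  rw [smul_conj_diagonal, hdiag, ← star_eq_conjTranspose, exp_unitary_conj Q hQ, exp_diagonal]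
  congr
  funext i
  simp [← Complex.exp_eq_exp_ℂ, Complex.ofReal_exp]

end Matrix

theorem stmt5_general {n : ℕ} (H1 Q : Matrix (Fin n) (Fin n) ℂ) (l : Fin n → ℝ)
    (hQ : Q ∈ Matrix.unitaryGroup (Fin n) ℂ)
    (hspec : H1 = Q * Matrix.diagonal (fun i => (l i : ℂ)) * Qᴴ)
    (lp : ℝ) (hlpub : ∀ i, l i ≤ lp)
    (u0 : Fin n → ℂ)
    (v : ℝ → ℝ → Fin n → ℂ)
    (hv : ∀ t p : ℝ, v t p =
      (Q * Matrix.diagonal (fun i => (Real.exp (-|p - l i * t|) : ℂ)) * Qᴴ).mulVec u0) :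
    ∀ t : ℝ, 0 ≤ t → ∀ p : ℝ, max (lp * t) 0 ≤ p →
      (NormedSpace.exp (t • H1)).mulVec u0 = Real.exp p • v t p := by
  intro t ht p hp
  have hwarp : Real.exp p • (fun i => (Real.exp (-|p - l i * t|) : ℂ)) =
      fun i => (Real.exp (l i * t) : ℂ) := by
    funext i
    have hle : l i * t ≤ p :=
      (mul_le_mul_of_nonneg_right (hlpub i) ht).trans ((le_max_left _ _).trans hp)
    rw [Pi.smul_apply, Complex.real_smul, ← Complex.ofReal_mul,
      Real.exp_mul_exp_neg_abs_sub_of_le hle]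
  rw [hspec, exp_smul_unitary_conj_diagonal_ofReal Q hQ, hv, ← smul_mulVec, smul_conj_diagonal,
    hwarp]

/-- for Hermitian `H₁ = Q Λ Q†` with real diagonal `Λ` and
`λ₊ = max{0, λ₁, …, λₙ}`, the explicit warped solution
`v(t,p) = Q diag(e^{-|p-λᵢt|}) Q† u₀` restores the solution of `u' = H₁u`,
`u(0) = u₀` via `exp(tH₁)u₀ = eᵖ v(t,p)` for all `t ≥ 0` and
`p ≥ max{λ₊ t, 0}`. -/
theorem stmt5 {n : ℕ} (H1 Q : Matrix (Fin n) (Fin n) ℂ) (l : Fin n → ℝ)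
    (hH1 : H1.IsHermitian) (hQ : Q ∈ Matrix.unitaryGroup (Fin n) ℂ)
    (hspec : H1 = Q * Matrix.diagonal (fun i => (l i : ℂ)) * Qᴴ)
    (lp : ℝ) (hlp0 : 0 ≤ lp) (hlpub : ∀ i, l i ≤ lp)
    (hlpmem : lp = 0 ∨ ∃ i, lp = l i)
    (u0 : Fin n → ℂ)
    (v : ℝ → ℝ → Fin n → ℂ)
    (hv : ∀ t p : ℝ, v t p =
      (Q * Matrix.diagonal (fun i => (Real.exp (-|p - l i * t|) : ℂ)) * Qᴴ).mulVec u0) :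
    ∀ t : ℝ, 0 ≤ t → ∀ p : ℝ, max (lp * t) 0 ≤ p →
      (NormedSpace.exp (t • H1)).mulVec u0 = Real.exp p • v t p :=
  stmt5_general H1 Q l hQ hspec lp hlpub u0 v hv
end

section
/- Let $H_1$ be an $n\times n$ complex Hermitian negative semi-definite matrix with spectral decomposition $H_1 = Q\Lambda Q^\dagger$, $Q$ unitary, $\Lambda = \mathrm{diag}(\lambda_1,\dots,\lambda_n)$ with all $\lambda_i\le 0$. For $t\ge 0$ define the transport propagator $T_t$ on functions $w:\mathbb{R}\to\mathbb{C}^n$ by $(T_t w)(p) := Q\,\big((Q^\dagger w)_i(p-\lambda_i t)\big)_{i=1}^n$. If $w:\mathbb{R}\to\mathbb{C}^n$ and $u\in\mathbb{C}^n$ satisfy $w(p) = e^{-p}u$ for all $p\ge 0$, then for every $t\ge 0$ and every $p\ge 0$, $(T_t w)(p) = e^{-p}\,\exp(tH_1)\,u$. -/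
open Matrix

/-!
Since `λᵢ t ≤ 0`, the transport only samples `w` at points `p - λᵢ t ≥ 0`, where
`w = e^{-p} u`; there `e^{-(p - λᵢ t)} = e^{-p} e^{λᵢ t}`, and the factors `e^{λᵢ t}` are exactly
the eigenvalues of `exp (t H₁) = Q diag(e^{λᵢ t}) Q†`.
-/

theorem Matrix.exp_unitary_conj_diagonal {m 𝔸 : Type*} [Fintype m] [DecidableEq m]
    [NormedCommRing 𝔸] [NormedAlgebra ℚ 𝔸] [CompleteSpace 𝔸] [StarRing 𝔸] {U : Matrix m m 𝔸}
    (hU : U ∈ unitaryGroup m 𝔸) (d : m → 𝔸) :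
    NormedSpace.exp (U * diagonal d * Uᴴ) = U * diagonal (NormedSpace.exp d) * Uᴴ := by
  rw [← exp_diagonal]
  exact exp_units_conj (Unitary.toUnits ⟨U, hU⟩) (diagonal d)

theorem apply_sub_mul_of_eq_exp_neg_smul {E : Type*} [AddCommGroup E] [Module ℝ E]
    {w : ℝ → E} {u : E} (hw : ∀ p : ℝ, 0 ≤ p → w p = Real.exp (-p) • u) {c t p : ℝ}
    (hc : c ≤ 0) (ht : 0 ≤ t) (hp : 0 ≤ p) :
    w (p - c * t) = (Real.exp (-p) * Real.exp (c * t)) • u := by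
  rw [hw _ (by nlinarith), ← Real.exp_add, neg_sub, sub_eq_neg_add]

theorem stmt8_general {n : ℕ} (H1 Q : Matrix (Fin n) (Fin n) ℂ) (l : Fin n → ℝ)
    (hQ : Q ∈ Matrix.unitaryGroup (Fin n) ℂ)
    (hspec : H1 = Q * Matrix.diagonal (fun i => (l i : ℂ)) * Qᴴ)
    (hneg : ∀ i, l i ≤ 0)
    (T : ℝ → (ℝ → Fin n → ℂ) → (ℝ → Fin n → ℂ))
    (hT : ∀ (t : ℝ) (w : ℝ → Fin n → ℂ) (p : ℝ),
      T t w p = Q.mulVec (fun i => Qᴴ.mulVec (w (p - l i * t)) i))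
    (w : ℝ → Fin n → ℂ) (u : Fin n → ℂ)
    (hw : ∀ p : ℝ, 0 ≤ p → w p = Real.exp (-p) • u) :
    ∀ t : ℝ, 0 ≤ t → ∀ p : ℝ, 0 ≤ p →
      T t w p = Real.exp (-p) • (NormedSpace.exp (t • H1)).mulVec u := by
  intro t ht p hp
  have hsmul : t • H1 = Q * diagonal (fun i => ((l i * t : ℝ) : ℂ)) * Qᴴ := by
    rw [hspec, ← smul_mul_assoc, ← mul_smul_comm, ← diagonal_smul]
    congr 3
    ext i
    simp [mul_comm]
  rw [hT, hsmul, exp_unitary_conj_diagonal hQ, ← mulVec_mulVec, ← mulVec_mulVec, ← mulVec_smul]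
  congr 1
  ext i
  rw [apply_sub_mul_of_eq_exp_neg_smul hw (hneg i) ht hp, mulVec_smul]
  simp only [Pi.smul_apply, mulVec_diagonal, Pi.coe_exp, ← Complex.exp_eq_exp_ℂ,
    Complex.real_smul]
  push_cast [Complex.ofReal_exp]
  ring

/-- for Hermitian negative semi-definite `H₁ = Q Λ Q†` (all
`λᵢ ≤ 0`), the transport propagator
`(T_t w)(p) = Q ((Q† w)ᵢ(p - λᵢ t))ᵢ` applied to a function satisfying
`w(p) = e^{-p} u` for `p ≥ 0` yields `(T_t w)(p) = e^{-p} exp(tH₁) u` for all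
`t ≥ 0`, `p ≥ 0`. -/
theorem stmt8 {n : ℕ} (H1 Q : Matrix (Fin n) (Fin n) ℂ) (l : Fin n → ℝ)
    (hH1 : H1.IsHermitian) (hQ : Q ∈ Matrix.unitaryGroup (Fin n) ℂ)
    (hspec : H1 = Q * Matrix.diagonal (fun i => (l i : ℂ)) * Qᴴ)
    (hneg : ∀ i, l i ≤ 0)
    (T : ℝ → (ℝ → Fin n → ℂ) → (ℝ → Fin n → ℂ))
    (hT : ∀ (t : ℝ) (w : ℝ → Fin n → ℂ) (p : ℝ),
      T t w p = Q.mulVec (fun i => Qᴴ.mulVec (w (p - l i * t)) i))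
    (w : ℝ → Fin n → ℂ) (u : Fin n → ℂ)
    (hw : ∀ p : ℝ, 0 ≤ p → w p = Real.exp (-p) • u) :
    ∀ t : ℝ, 0 ≤ t → ∀ p : ℝ, 0 ≤ p →
      T t w p = Real.exp (-p) • (NormedSpace.exp (t • H1)).mulVec u :=
  stmt8_general H1 Q l hQ hspec hneg T hT w u hw
end
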